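/- arXiv:1905.09782 — 2 statements merged into one kernel-verified Lean document; each statement's English description precedes it below -/
import Mathlib

section
/- (Tarski–Bourbaki) Let E be a set, S ⊆ P(E), and φ : S → E a map such that φ(X) ∉ X for all X ∈ S. Then there exists a unique subset M of E admitting a well-ordering such that: (1) for every x ∈ M, the initial segment S_x = {y ∈ M | y < x} belongs to S and φ(S_x) = x; (2) M ∉ S. -/
/-!
Iterate φ transfinitely: at stage `o`, apply φ to the set of values produced at earlier stages,
as long as that set lies in `S`. Since `φ X ∉ X`, no value repeats, so by Hartogs the iteration
stops at some ordinal `θ`; the values produced before `θ`, ordered by stage, form `M`.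
For uniqueness, induction on stages shows that every set of values produced so far is an initial
segment of any other solution `M'`; a proper initial segment of `M'` is the segment below the least
element outside it and hence lies in `S`, so the final one, which is not in `S`, is all of `M'`.
-/

universe u

namespace TarskiBourbaki

variable {E : Type u}

def IsGood (S : Set (Set E)) (φ : Set E → E) (M : Set E) (r : E → E → Prop) : Prop :=
  ∀ x ∈ M, {y ∈ M | r y x} ∈ S ∧ φ {y ∈ M | r y x} = x

def IsCut (r : E → E → Prop) (M A : Set E) : Prop :=
  A ⊆ M ∧ ∀ x ∈ A, ∀ y ∈ M, y ∉ A → r x y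

section WellOrder

variable {S : Set (Set E)} {φ : Set E → E} {M A : Set E} {r : E → E → Prop}

lemma IsCut.exists_min (hwo : IsWellOrder M (fun x y : M => r x y)) (hA : IsCut r M A)
    (hne : A ≠ M) :
    ∃ m ∈ M, m ∉ A ∧ {y ∈ M | r y m} = A ∧ ∀ y ∈ M, y ∉ A → y ≠ m → r m y := by
  obtain ⟨z, hzM, hzA⟩ := Set.exists_of_ssubset (hA.1.ssubset_of_ne hne)
  obtain ⟨⟨m, hmM⟩, hmA, hmin⟩ := hwo.wf.has_min {w : M | w.1 ∉ A} ⟨⟨z, hzM⟩, hzA⟩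
  have hseg : {y ∈ M | r y m} = A := by
    ext y
    exact ⟨fun ⟨hyM, hym⟩ => by_contra fun hyA => hmin ⟨y, hyM⟩ hyA hym,
      fun hyA => ⟨hA.1 hyA, hA.2 y hyA m hmM hmA⟩⟩
  refine ⟨m, hmM, hmA, hseg, fun y hyM hyA hym => by_contra fun hmy => hym ?_⟩
  have hym' : ¬ r y m := fun h => hyA (hseg ▸ ⟨hyM, h⟩)
  exact congrArg Subtype.val (hwo.trichotomous ⟨y, hyM⟩ ⟨m, hmM⟩ hym' hmy)

lemma IsGood.mem_and_phi_min_of_isCut (hwo : IsWellOrder M (fun x y : M => r x y))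
    (hgood : IsGood S φ M r) (hA : IsCut r M A) (hne : A ≠ M) :
    A ∈ S ∧ φ A ∈ M ∧ φ A ∉ A ∧ ∀ y ∈ M, y ∉ A → y ≠ φ A → r (φ A) y := by
  obtain ⟨m, hmM, hmA, hseg, hmin⟩ := hA.exists_min hwo hne
  obtain ⟨hS, hφm⟩ := hgood m hmM
  rw [hseg] at hS hφm
  exact ⟨hS, hφm ▸ hmM, hφm ▸ hmA, hφm ▸ hmin⟩

lemma IsGood.eq_of_isCut_of_notMem (hwo : IsWellOrder M (fun x y : M => r x y))
    (hgood : IsGood S φ M r) (hA : IsCut r M A) (hAS : A ∉ S) : A = M :=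
  by_contra fun hne => hAS (hgood.mem_and_phi_min_of_isCut hwo hA hne).1

end WellOrder

variable (S : Set (Set E)) (φ : Set E → E)

-- `none` marks that the iteration has stopped. The inner set is `segment S φ o`, written with
-- `∃ _ : p < o` so that the recursive call sees `p < o`.
open scoped Classical in
noncomputable def seq (o : Ordinal.{u}) : Option E :=
  if {x | ∃ p, ∃ _ : p < o, seq p = some x} ∈ S then
    some (φ {x | ∃ p, ∃ _ : p < o, seq p = some x})
  else none
termination_by o

def segment (o : Ordinal.{u}) : Set E := {x | ∃ p < o, seq S φ p = some x}

noncomputable def rank (x : E) : Ordinal.{u} := sInf {o | seq S φ o = some x}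

variable {S φ}

lemma seq_eq_some_iff {o : Ordinal.{u}} {x : E} :
    seq S φ o = some x ↔ segment S φ o ∈ S ∧ φ (segment S φ o) = x := by
  rw [seq]
  split_ifs with h <;> simp_all [segment]

lemma seq_eq_none_iff {o : Ordinal.{u}} : seq S φ o = none ↔ segment S φ o ∉ S := by
  rw [seq]
  split_ifs with h <;> simp_all [segment]

lemma segment_mono : Monotone (segment S φ) :=
  fun _ _ hpq _ ⟨r, hr, hrx⟩ => ⟨r, hr.trans_le hpq, hrx⟩

lemma eq_of_seq_eq_some (hφ : ∀ X ∈ S, φ X ∉ X) {p q : Ordinal.{u}} {x : E}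
    (hp : seq S φ p = some x) (hq : seq S φ q = some x) : p = q := by
  have hnot_lt : ∀ {a b}, seq S φ a = some x → seq S φ b = some x → ¬ a < b := fun ha hb hab =>
    have ⟨hbS, hbx⟩ := seq_eq_some_iff.1 hb
    hφ _ hbS (hbx ▸ ⟨_, hab, ha⟩)
  exact le_antisymm (le_of_not_gt (hnot_lt hq hp)) (le_of_not_gt (hnot_lt hp hq))

lemma exists_seq_eq_none (hφ : ∀ X ∈ S, φ X ∉ X) : ∃ o : Ordinal.{u}, seq S φ o = none := by
  by_contra! h
  choose g hg using fun o => Option.ne_none_iff_exists'.1 (h o)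
  exact not_injective_of_ordinal g fun a b hab => eq_of_seq_eq_some hφ (hg a) (hab ▸ hg b)

lemma seq_rank_of_mem_segment {o : Ordinal.{u}} {x : E} (hx : x ∈ segment S φ o) :
    seq S φ (rank S φ x) = some x ∧ rank S φ x < o :=
  have ⟨p, hp, hpx⟩ := hx
  ⟨csInf_mem (s := {o | seq S φ o = some x}) ⟨p, hpx⟩,
    (csInf_le' (s := {o | seq S φ o = some x}) hpx).trans_lt hp⟩

lemma isWellOrder_segment (o : Ordinal.{u}) :
    IsWellOrder (segment S φ o) (fun x y => rank S φ x < rank S φ y) := by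
  have hinj : Set.InjOn (rank S φ) (segment S φ o) := fun x hx y hy hxy =>
    Option.some.inj ((seq_rank_of_mem_segment hx).1.symm.trans
      (hxy ▸ (seq_rank_of_mem_segment hy).1))
  exact (RelEmbedding.preimage ⟨_, hinj.injective⟩ (· < ·)).isWellOrder

lemma sep_rank_lt_eq_segment {o : Ordinal.{u}} {x : E} (hx : x ∈ segment S φ o) :
    {y ∈ segment S φ o | rank S φ y < rank S φ x} = segment S φ (rank S φ x) := by
  ext y
  constructor
  · rintro ⟨hy, hyx⟩
    exact ⟨_, hyx, (seq_rank_of_mem_segment hy).1⟩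
  · intro hy
    obtain ⟨p, hp, hpy⟩ := id hy
    exact ⟨segment_mono (seq_rank_of_mem_segment hx).2.le hy,
      (csInf_le' (s := {o | seq S φ o = some y}) hpy).trans_lt hp⟩

lemma isGood_segment (o : Ordinal.{u}) :
    IsGood S φ (segment S φ o) (fun x y => rank S φ x < rank S φ y) := fun x hx => by
  rw [sep_rank_lt_eq_segment hx]
  exact seq_eq_some_iff.1 (seq_rank_of_mem_segment hx).1

lemma isCut_segment {M : Set E} {r : E → E → Prop} (hwo : IsWellOrder M (fun x y : M => r x y))
    (hgood : IsGood S φ M r) (hM : M ∉ S) (o : Ordinal.{u}) : IsCut r M (segment S φ o) := by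
  induction o using WellFoundedLT.induction with | _ o ih
  have hstep : ∀ x ∈ segment S φ o, x ∈ M ∧ ∀ y ∈ M, y ∉ segment S φ o → r x y := by
    rintro x ⟨p, hp, hpx⟩
    obtain ⟨hpS, rfl⟩ := seq_eq_some_iff.1 hpx
    have hpM : segment S φ p ≠ M := fun h => hM (h ▸ hpS)
    obtain ⟨-, hxM, -, hmin⟩ := hgood.mem_and_phi_min_of_isCut hwo (ih p hp) hpM
    refine ⟨hxM, fun y hyM hyo => hmin y hyM (fun hy => hyo (segment_mono hp.le hy)) ?_⟩
    rintro rfl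
    exact hyo ⟨p, hp, hpx⟩
  exact ⟨fun x hx => (hstep x hx).1, fun x hx => (hstep x hx).2⟩

end TarskiBourbaki

theorem tarski_bourbaki {E : Type*} (S : Set (Set E)) (φ : Set E → E)
    (hφ : ∀ X ∈ S, φ X ∉ X) :
    ∃! M : Set E, ∃ r : E → E → Prop,
      IsWellOrder M (fun x y : M => r x y) ∧
      (∀ x ∈ M, {y ∈ M | r y x} ∈ S ∧ φ {y ∈ M | r y x} = x) ∧
      M ∉ S := by
  open TarskiBourbaki in
  obtain ⟨θ, hθ⟩ := exists_seq_eq_none hφ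
  have hθS : segment S φ θ ∉ S := seq_eq_none_iff.1 hθ
  refine ⟨segment S φ θ, ⟨_, isWellOrder_segment θ, isGood_segment θ, hθS⟩, ?_⟩
  rintro M ⟨r, hwo, hgood, hM⟩
  exact (IsGood.eq_of_isCut_of_notMem hwo hgood (isCut_segment hwo hgood hM θ) hθS).symm
end

section
/- (Kanamori) Let E be a set and ψ : P(E) → E any map. Then there exists a unique subset M of E admitting a well-ordering such that: (1) for every x ∈ M, ψ(S_x) = x, where S_x = {y ∈ M | y < x}; (2) ψ(M) ∈ M. -/
/-!
Let `f` be defined on ordinals by transfinite recursion, `f α = ψ (f '' Iio α)`. Since the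
ordinals do not inject into `E`, there is a least `α₀` with `f α₀ ∈ f '' Iio α₀`; `f` is injective
below `α₀`, and `f '' Iio α₀`, ordered by indices, is a set `M` as required. Conversely, if `M`
is such a set and `τ` is its order type, induction along `M` shows that every `x ∈ M` is `f` of
its rank, so `M = f '' Iio τ`, and `ψ M ∈ M` forces `τ` to be the least repetition index `α₀`.
-/

open Set Ordinal Function

universe u

theorem injOn_Iio_iff {ι E : Type*} [LinearOrder ι] {f : ι → E} {α : ι} :
    InjOn f (Iio α) ↔ ∀ β < α, f β ∉ f '' Iio β := by
  constructor
  · rintro hf β hβ ⟨γ, hγ, he⟩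
    exact (ne_of_lt hγ) (hf (lt_trans hγ hβ) hβ he)
  · intro h β hβ γ hγ he
    rcases lt_trichotomy β γ with hlt | heq | hgt
    · exact absurd ⟨β, hlt, he⟩ (h γ hγ)
    · exact heq
    · exact absurd ⟨γ, hgt, he.symm⟩ (h β hβ)

theorem Set.InjOn.exists_isWellOrder_image {ι E : Type*} [LinearOrder ι] [WellFoundedLT ι]
    [Nonempty ι] {f : ι → E} {s : Set ι} (hf : InjOn f s) :
    ∃ r : E → E → Prop, IsWellOrder (f '' s) (fun x y : f '' s => r x y) ∧
      ∀ a ∈ s, ∀ b ∈ s, r (f a) (f b) ↔ a < b := by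
  refine ⟨fun x y => invFunOn f s x < invFunOn f s y, ?_, fun a ha b hb => by
    beta_reduce
    rw [hf.leftInvOn_invFunOn ha, hf.leftInvOn_invFunOn hb]⟩
  have hg : Injective fun x : f '' s => invFunOn f s x := fun x y hxy =>
    Subtype.ext <| by rw [← invFunOn_eq x.2, ← invFunOn_eq y.2]; exact congrArg f hxy
  exact (RelEmbedding.preimage ⟨_, hg⟩ (· < ·)).isWellOrder

noncomputable def kanamoriSeq {E : Type u} (ψ : Set E → E) (α : Ordinal.{u}) : E :=
  ψ (range fun β : Iio α => kanamoriSeq ψ β)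
termination_by α
decreasing_by exact β.2

section kanamoriSeq

variable {E : Type u} {ψ : Set E → E}

theorem kanamoriSeq_eq (α : Ordinal.{u}) :
    kanamoriSeq ψ α = ψ (kanamoriSeq ψ '' Iio α) := by
  rw [kanamoriSeq, image_eq_range]

theorem exists_kanamoriSeq_mem_image_Iio :
    ∃ α, kanamoriSeq ψ α ∈ kanamoriSeq ψ '' Iio α := by
  by_contra! h
  refine not_injective_of_ordinal (kanamoriSeq ψ) fun β γ he => ?_
  exact injOn_Iio_iff.2 (fun δ _ => h δ) (Order.lt_succ_of_le (le_max_left β γ))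
    (Order.lt_succ_of_le (le_max_right β γ)) he

theorem exists_wellOrder_of_isLeast {α₀ : Ordinal.{u}}
    (h : IsLeast {α | kanamoriSeq ψ α ∈ kanamoriSeq ψ '' Iio α} α₀) :
    ∃ r : E → E → Prop,
      IsWellOrder (kanamoriSeq ψ '' Iio α₀) (fun x y : kanamoriSeq ψ '' Iio α₀ => r x y) ∧
      (∀ x ∈ kanamoriSeq ψ '' Iio α₀, ψ {y ∈ kanamoriSeq ψ '' Iio α₀ | r y x} = x) ∧
      ψ (kanamoriSeq ψ '' Iio α₀) ∈ kanamoriSeq ψ '' Iio α₀ := by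
  have hinj : InjOn (kanamoriSeq ψ) (Iio α₀) :=
    injOn_Iio_iff.2 fun β hβ hmem => not_le.2 hβ (h.2 hmem)
  obtain ⟨r, hwo, hr⟩ := hinj.exists_isWellOrder_image
  refine ⟨r, hwo, ?_, by rw [← kanamoriSeq_eq (ψ := ψ)]; exact h.1⟩
  rintro _ ⟨γ, hγ, rfl⟩
  have hsegment : {y ∈ kanamoriSeq ψ '' Iio α₀ | r y (kanamoriSeq ψ γ)} =
      kanamoriSeq ψ '' Iio γ := by
    ext y
    constructor
    · rintro ⟨⟨β, hβ, rfl⟩, hβγ⟩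
      exact ⟨β, (hr β hβ γ hγ).1 hβγ, rfl⟩
    · rintro ⟨β, hβγ, rfl⟩
      have hβ : β < α₀ := lt_trans hβγ hγ
      exact ⟨⟨β, hβ, rfl⟩, (hr β hβ γ hγ).2 hβγ⟩
  rw [hsegment, ← kanamoriSeq_eq (ψ := ψ)]

variable {M : Set E} {r : E → E → Prop} [IsWellOrder M (fun x y : M => r x y)]

theorem kanamoriSeq_typein (hM : ∀ x ∈ M, ψ {y ∈ M | r y x} = x) (x : M) :
    kanamoriSeq ψ (typein (fun x y : M => r x y) x) = x := by
  induction x using IsWellFounded.induction (fun x y : M => r x y) with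
  | _ x ih =>
    have hsegment : kanamoriSeq ψ '' Iio (typein (fun x y : M => r x y) x) = {y ∈ M | r y x} := by
      ext y
      constructor
      · rintro ⟨β, hβ, rfl⟩
        obtain ⟨z, rfl⟩ := typein_surj _ (lt_trans hβ (typein_lt_type _ x))
        have hzx : r z x := (typein_lt_typein (fun x y : M => r x y)).1 hβ
        rw [ih z hzx]
        exact ⟨z.2, hzx⟩
      · rintro ⟨hy, hyx⟩
        exact ⟨_, (typein_lt_typein (fun x y : M => r x y)).2 hyx, ih ⟨y, hy⟩ hyx⟩
    rw [kanamoriSeq_eq, hsegment, hM x x.2]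

theorem image_kanamoriSeq_Iio_type (hM : ∀ x ∈ M, ψ {y ∈ M | r y x} = x) :
    kanamoriSeq ψ '' Iio (type fun x y : M => r x y) = M := by
  ext y
  constructor
  · rintro ⟨β, hβ, rfl⟩
    obtain ⟨x, rfl⟩ := typein_surj _ hβ
    rw [kanamoriSeq_typein hM]
    exact x.2
  · intro hy
    exact ⟨_, typein_lt_type (fun x y : M => r x y) ⟨y, hy⟩, kanamoriSeq_typein hM ⟨y, hy⟩⟩

theorem injOn_kanamoriSeq_Iio_type (hM : ∀ x ∈ M, ψ {y ∈ M | r y x} = x) :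
    InjOn (kanamoriSeq ψ) (Iio (type fun x y : M => r x y)) := by
  rintro β hβ γ hγ he
  obtain ⟨x, rfl⟩ := typein_surj _ hβ
  obtain ⟨y, rfl⟩ := typein_surj _ hγ
  rw [kanamoriSeq_typein hM, kanamoriSeq_typein hM] at he
  rw [Subtype.ext he]

theorem isLeast_type (hM : ∀ x ∈ M, ψ {y ∈ M | r y x} = x) (htop : ψ M ∈ M) :
    IsLeast {α | kanamoriSeq ψ α ∈ kanamoriSeq ψ '' Iio α} (type fun x y : M => r x y) := by
  refine ⟨?_, fun β hβ => not_lt.1 fun hlt =>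
    injOn_Iio_iff.1 (injOn_kanamoriSeq_Iio_type hM) β hlt hβ⟩
  change kanamoriSeq ψ _ ∈ kanamoriSeq ψ '' _
  rw [kanamoriSeq_eq, image_kanamoriSeq_Iio_type hM]
  exact htop

end kanamoriSeq

theorem kanamori {E : Type*} (ψ : Set E → E) :
    ∃! M : Set E, ∃ r : E → E → Prop,
      IsWellOrder M (fun x y : M => r x y) ∧
      (∀ x ∈ M, ψ {y ∈ M | r y x} = x) ∧
      ψ M ∈ M := by
  obtain ⟨α₀, hα₀⟩ : ∃ α₀, IsLeast {α | kanamoriSeq ψ α ∈ kanamoriSeq ψ '' Iio α} α₀ :=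
    ⟨_, isLeast_csInf exists_kanamoriSeq_mem_image_Iio⟩
  refine ⟨_, exists_wellOrder_of_isLeast hα₀, ?_⟩
  rintro M ⟨r, _, hM, htop⟩
  rw [← image_kanamoriSeq_Iio_type hM, (isLeast_type hM htop).unique hα₀]
end
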